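/- arXiv:1703.01480 — 9 statements merged into one kernel-verified Lean document; each statement's English description precedes it below -/
import Mathlib

section
/- Let X be a path-connected Hausdorff topological space and let m, l be points of X. Then the lion has a strategy: there exists a function S from continuous paths α : [0,∞) → X with α(0) = m to continuous paths S(α) : [0,∞) → X with S(α)(0) = l, such that (i) for each α there exists t ≥ 0 with S(α)(t) = α(t), and (ii) whenever α and α' agree on [0,t), S(α) and S(α') agree on [0,t]. -/
/-- A continuous path `[0,∞) → X` starting at `x`. -/
def PathFrom (X : Type*) [TopologicalSpace X] (x : X) : Type _ :=
  {γ : NNReal → X // Continuous γ ∧ γ 0 = x}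

/-- A strategy for the lion: man starts at `m`, lion at `l`; the lion captures the man
at some time, and the no-lookahead rule holds. -/
def IsLionStrategy {X : Type*} [TopologicalSpace X] (m l : X)
    (S : PathFrom X m → PathFrom X l) : Prop :=
  (∀ α : PathFrom X m, ∃ t : NNReal, (S α).1 t = α.1 t) ∧
  (∀ (α α' : PathFrom X m) (t : NNReal),
    (∀ s < t, α.1 s = α'.1 s) → ∀ s ≤ t, (S α).1 s = (S α').1 s)

/-- A strategy for the man: man starts at `m`, lion at `l`; the man evades the lion
at all times, and the no-lookahead rule holds. -/
def IsManStrategy {X : Type*} [TopologicalSpace X] (m l : X)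
    (S : PathFrom X l → PathFrom X m) : Prop :=
  (∀ (β : PathFrom X l) (t : NNReal), (S β).1 t ≠ β.1 t) ∧
  (∀ (β β' : PathFrom X l) (t : NNReal),
    (∀ s < t, β.1 s = β'.1 s) → ∀ s ≤ t, (S β).1 s = (S β').1 s)

/-!
The lion first runs along a path from `l` to `m` during `[0, 1]`, then retraces the man's path
at double speed until it catches up with him at time `2`: at time `t` it stands where the man
stood at time `chaseTime t ≤ t`. So the lion only looks at the man's past, and two continuous
man-paths agreeing on `[0, t)` agree on `[0, t]` (Hausdorffness), which gives no-lookahead.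
-/

open Set

lemma PathFrom.eqOn_Iic_of_eqOn_Iio {X : Type*} [TopologicalSpace X] [T2Space X] {m : X}
    (α α' : PathFrom X m) {t : NNReal} (h : ∀ s < t, α.1 s = α'.1 s) :
    EqOn α.1 α'.1 (Iic t) := by
  rcases eq_or_ne t 0 with rfl | ht
  · intro s hs
    obtain rfl : s = 0 := nonpos_iff_eq_zero.mp hs
    exact α.2.2.trans α'.2.2.symm
  · refine EqOn.of_subset_closure (s := Iio t) h α.2.1.continuousOn α'.2.1.continuousOn
      Iio_subset_Iic_self ?_
    rw [closure_Iio' ⟨0, pos_iff_ne_zero.mpr ht⟩]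

noncomputable def chaseTime (t : NNReal) : NNReal := min t (2 * (t - 1))

lemma continuous_chaseTime : Continuous chaseTime :=
  continuous_id.min (continuous_const.mul (continuous_id.sub continuous_const))

lemma chaseTime_le (t : NNReal) : chaseTime t ≤ t := min_le_left _ _

lemma chaseTime_one : chaseTime 1 = 0 := by simp [chaseTime]

lemma chaseTime_two : chaseTime 2 = 2 := by
  rw [chaseTime, ← NNReal.coe_inj]
  norm_num

section Chase

variable {X : Type*} [TopologicalSpace X] {m l : X}

noncomputable def chase (p : Path l m) (α : PathFrom X m) : PathFrom X l :=
  ⟨fun t => if t ≤ 1 then p.extend t else α.1 (chaseTime t),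
    Continuous.if_le (p.continuous_extend.comp NNReal.continuous_coe)
      (α.2.1.comp continuous_chaseTime) continuous_id continuous_const
      (fun t ht => by simp [show t = 1 from ht, chaseTime_one, α.2.2]),
    by simp⟩

lemma chase_two (p : Path l m) (α : PathFrom X m) : (chase p α).1 2 = α.1 2 := by
  simp [chase, chaseTime_two, show ¬(2 : NNReal) ≤ 1 by norm_num]

lemma chase_eq_of_eqOn_Iic (p : Path l m) {α α' : PathFrom X m} {t : NNReal}
    (h : EqOn α.1 α'.1 (Iic t)) : EqOn (chase p α).1 (chase p α').1 (Iic t) := by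
  intro s hs
  by_cases hs1 : s ≤ 1
  · simp [chase, hs1]
  · simp only [chase, hs1, if_false]
    exact h ((chaseTime_le s).trans hs)

end Chase

/-- In a path-connected Hausdorff space the lion has a strategy
for any starting points. -/
theorem stmt_0 {X : Type*} [TopologicalSpace X] [PathConnectedSpace X] [T2Space X]
    (m l : X) : ∃ S : PathFrom X m → PathFrom X l, IsLionStrategy m l S := by
  obtain ⟨p⟩ := PathConnectedSpace.joined l m
  refine ⟨chase p, fun α => ⟨2, chase_two p α⟩, fun α α' t h s hs => ?_⟩
  exact chase_eq_of_eqOn_Iic p (α.eqOn_Iic_of_eqOn_Iio α' h) hs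
end

section
/- Let X be a Hausdorff space admitting a continuous fixed-point-free map f : X → X. Then there exist starting points m, l ∈ X (namely any l and m = f(l)) for which the man has a strategy: a function S from continuous paths β starting at l to continuous paths starting at m such that S(β)(t) ≠ β(t) for all t ≥ 0, and satisfying the no-lookahead rule. -/
/-! The man plays `f ∘ β` against the lion's path `β`: as `f` has no fixed point he is never
caught. His position at time `t` depends only on `β t`, and in a Hausdorff space a continuous
path is determined at `t` by its values on `[0, t)`, so the strategy does not look ahead. -/

open Set

namespace PathFrom

variable {X Y : Type*} [TopologicalSpace X] [TopologicalSpace Y] {x : X}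

def map (β : PathFrom X x) {f : X → Y} (hf : Continuous f) : PathFrom Y (f x) :=
  ⟨f ∘ β.1, hf.comp β.2.1, congrArg f β.2.2⟩

theorem eq_of_forall_lt_eq [T2Space X] {β β' : PathFrom X x} {t : NNReal}
    (h : ∀ s < t, β.1 s = β'.1 s) : ∀ s ≤ t, β.1 s = β'.1 s := by
  rcases eq_zero_or_pos t with rfl | ht
  · intro s hs
    rw [nonpos_iff_eq_zero.mp hs, β.2.2, β'.2.2]
  · have hcl : closure (Iio t) = Iic t := closure_Iio' ⟨0, ht⟩
    intro s hs
    exact EqOn.closure (fun s hs => h s hs) β.2.1 β'.2.1 (hcl ▸ hs : s ∈ closure (Iio t))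

end PathFrom

/-- If a Hausdorff space admits a continuous fixed-point-free self-map `f`,
then for any `l` and `m = f l` the man has a strategy. -/
theorem stmt_1 {X : Type*} [TopologicalSpace X] [T2Space X]
    (f : X → X) (hf : Continuous f) (hfix : ∀ x : X, f x ≠ x) (l : X) :
    ∃ S : PathFrom X l → PathFrom X (f l), IsManStrategy (f l) l S :=
  ⟨fun β => β.map hf, fun β t => hfix (β.1 t),
    fun _ _ _ h s hs => congrArg f (PathFrom.eq_of_forall_lt_eq h s hs)⟩
end

section
/- Let X be a nonempty set with the indiscrete topology (the only open sets are ∅ and X) and let m, l ∈ X. Then the lion has a strategy: a function S from continuous paths starting at m to continuous paths starting at l, satisfying the no-lookahead rule, such that for every man-path α there exists t ≥ 0 with S(α)(t) = α(t). -/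
/-!
Well-order all functions `[0,∞) → X`. At each time `t > 0` the lion stands where the least
function agreeing with the man's path on `[0,t)` predicts the man to be at time `t`; this
only looks at the past, and on an indiscrete space every such path is continuous. If the
prediction were wrong at every time `1/(n+1)`, then, since agreeing on a longer interval is a
stronger constraint, these predictors would form a strictly descending sequence in the
well-order, which is impossible.
-/

open scoped NNReal

section Predictor

variable {T Y : Type*} [Preorder T] (r : (T → Y) → (T → Y) → Prop) [IsWellOrder (T → Y) r]

noncomputable def predictor (a : T → Y) (t : T) : T → Y :=
  (IsWellFounded.wf (r := r)).min {g | ∀ s < t, g s = a s} ⟨a, fun _ _ => rfl⟩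

theorem predictor_apply_of_lt (a : T → Y) {s t : T} (hst : s < t) :
    predictor r a t s = a s :=
  (IsWellFounded.wf (r := r)).min_mem {g | ∀ s < t, g s = a s} _ s hst

theorem predictor_congr {a b : T → Y} {t : T} (hab : ∀ s < t, a s = b s) :
    predictor r a t = predictor r b t := by
  have : {g : T → Y | ∀ s < t, g s = a s} = {g | ∀ s < t, g s = b s} := by
    ext g
    exact forall₂_congr fun s hs => by rw [hab s hs]
  simp only [predictor, this]

theorem not_predictor_lt_of_le (a : T → Y) {t t' : T} (h : t' ≤ t) :
    ¬ r (predictor r a t) (predictor r a t') :=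
  (IsWellFounded.wf (r := r)).not_lt_min {g | ∀ s < t', g s = a s}
    fun _ hs => predictor_apply_of_lt r a (hs.trans_le h)

theorem exists_predictor_apply_eq (a : T → Y) {u : ℕ → T} (hu : StrictAnti u) :
    ∃ n, predictor r a (u n) (u n) = a (u n) := by
  let f n := predictor r a (u n)
  obtain ⟨n, hn⟩ := (IsWellFounded.wf (r := r)).min_mem (Set.range f) ⟨f 0, 0, rfl⟩
  have hmin : ¬ r (f (n + 1)) (f n) := hn ▸
    (IsWellFounded.wf (r := r)).not_lt_min (Set.range f) ⟨n + 1, rfl⟩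
  have hle : ¬ r (f n) (f (n + 1)) := not_predictor_lt_of_le r a (hu n.lt_succ_self).le
  have heq : f (n + 1) = f n := by
    rcases trichotomous_of r (f (n + 1)) (f n) with h | h | h
    exacts [absurd h hmin, h, absurd h hle]
  refine ⟨n + 1, ?_⟩
  rw [← predictor_apply_of_lt r a (hu n.lt_succ_self)]
  exact congrFun heq _

end Predictor

section Lion

variable {X : Type*} [TopologicalSpace X]

noncomputable def predictorStrategy (hcont : ∀ γ : ℝ≥0 → X, Continuous γ) (m l : X)
    (α : PathFrom X m) : PathFrom X l :=
  ⟨fun t => if t = 0 then l else predictor WellOrderingRel α.1 t t, hcont _, if_pos rfl⟩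

theorem isLionStrategy_predictorStrategy (hcont : ∀ γ : ℝ≥0 → X, Continuous γ) (m l : X) :
    IsLionStrategy m l (predictorStrategy hcont m l) := by
  refine ⟨fun α => ?_, fun α α' t hagree s hst => ?_⟩
  · have hu : StrictAnti fun n : ℕ => (1 / (n + 1) : ℝ≥0) :=
      fun _ _ h => Nat.one_div_lt_one_div h
    obtain ⟨n, hn⟩ := exists_predictor_apply_eq WellOrderingRel α.1 hu
    exact ⟨_, (if_neg (by positivity)).trans hn⟩
  · by_cases hs : s = 0
    · simp only [predictorStrategy, if_pos hs]
    · simp only [predictorStrategy, if_neg hs,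
        predictor_congr WellOrderingRel fun s' hs' => hagree s' (hs'.trans_le hst)]

end Lion

theorem continuous_of_forall_isOpen_eq_empty_or_univ {α β : Type*} [TopologicalSpace α]
    [TopologicalSpace β] (hind : ∀ U : Set β, IsOpen U → U = ∅ ∨ U = Set.univ) (f : α → β) :
    Continuous f := by
  refine continuous_def.2 fun U hU => ?_
  rcases hind U hU with rfl | rfl
  exacts [isOpen_empty, isOpen_univ]

/-- On an indiscrete space the lion has a strategy for any starting points. -/
theorem stmt_2 {X : Type*} [TopologicalSpace X]
    (hind : ∀ U : Set X, IsOpen U → U = ∅ ∨ U = Set.univ) (m l : X) :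
    ∃ S : PathFrom X m → PathFrom X l, IsLionStrategy m l S :=
  ⟨_, isLionStrategy_predictorStrategy (continuous_of_forall_isOpen_eq_empty_or_univ hind) m l⟩
end

section
/- In X = [0,1] with the standard topology, with any starting points m ≠ l, the man does not have a strategy in the lion-and-man game: for any putative strategy S for the man, there exists a continuous lion path β starting at l such that S(β)(t) = β(t) for some t ≥ 0. -/
open Set

theorem exists_eq_of_eq_bot_of_eq_top {X α : Type*} [TopologicalSpace X] [PreconnectedSpace X]
    [LinearOrder α] [BoundedOrder α] [TopologicalSpace α] [OrderClosedTopology α]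
    {f g : X → α} (hf : Continuous f) (hg : Continuous g) {a b : X} (ha : f a = ⊥)
    (hb : f b = ⊤) : ∃ x, f x = g x :=
  intermediate_value_univ₂ hf hg (ha ▸ bot_le) (hb ▸ le_top)

namespace PathFrom

/-- The lion runs from `l` down to `0` and then up to `1`, so it meets every path in `[0,1]`. -/
noncomputable def sweepIcc (l : Icc (0:ℝ) 1) : PathFrom (Icc (0:ℝ) 1) l :=
  ⟨fun t => projIcc 0 1 zero_le_one |(t : ℝ) - l|, by fun_prop, by
    simp [abs_of_nonneg l.2.1]⟩

theorem sweepIcc_apply_eq_bot (l : Icc (0:ℝ) 1) : (sweepIcc l).1 (l : ℝ).toNNReal = ⊥ := by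
  ext
  simp [sweepIcc, l.2.1]

theorem sweepIcc_apply_eq_top (l : Icc (0:ℝ) 1) :
    (sweepIcc l).1 ((l : ℝ).toNNReal + 1) = ⊤ := by
  ext
  simp [sweepIcc, l.2.1]

end PathFrom

theorem stmt_4_general (m l : Set.Icc (0:ℝ) 1) :
    ¬ ∃ S : PathFrom (Set.Icc (0:ℝ) 1) l → PathFrom (Set.Icc (0:ℝ) 1) m,
      IsManStrategy m l S := by
  rintro ⟨S, hevade, -⟩
  obtain ⟨t, hcaught⟩ := exists_eq_of_eq_bot_of_eq_top (PathFrom.sweepIcc l).2.1 (S _).2.1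
    (PathFrom.sweepIcc_apply_eq_bot l) (PathFrom.sweepIcc_apply_eq_top l)
  exact hevade _ t hcaught.symm

/-- In `[0,1]` the man has no strategy, for any distinct starting points. -/
theorem stmt_4 (m l : Set.Icc (0:ℝ) 1) (hml : m ≠ l) :
    ¬ ∃ S : PathFrom (Set.Icc (0:ℝ) 1) l → PathFrom (Set.Icc (0:ℝ) 1) m,
      IsManStrategy m l S :=
  stmt_4_general m l
end

section
/- Let X be a well-ordered set without maximum, with the topology whose proper open sets are the strict initial segments X_{<x}, such that every subset of X of cardinality at most 𝔠 = |ℝ| is bounded above. Let l = min(X) and m be the second element of X. Then the lion does not have a strategy in the lion-and-man game on X with these starting points. -/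
/-!
The man builds his path by Zorn's lemma on partial evasions: a time `t` and a path avoiding
the lion's response on `[0, t)`, ordered by extension. Whenever the lion's response at time
`t` is known, the man can jump at time `t` to a point `b` above it; this is continuous for the
initial-segment topology as long as `b` lies above the man's earlier positions, and such a
`b` exists because a path has at most `𝔠` values. Continuity in this topology only rules
out sudden upward moves, so the lion stays below `b` for a while: no partial evasion is
maximal. A chain of partial evasions glues to a path on `[0, sup t)`, followed by a jump; if
the times are unbounded, the glued path is never caught, contradicting capture.
-/

open Set Filter NNReal

def HasInitialSegmentTopology (X : Type*) [LinearOrder X] [TopologicalSpace X] : Prop :=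
  ∀ U : Set X, IsOpen U ↔ U = ∅ ∨ U = Set.univ ∨ ∃ x : X, U = Set.Iio x

theorem exists_forall_lt_of_bddAbove {X : Type*} [LinearOrder X] [NoMaxOrder X]
    (hbdd : ∀ Y : Set X, Cardinal.mk Y ≤ Cardinal.continuum → BddAbove Y) (f : ℝ≥0 → X) :
    ∃ b, ∀ s, f s < b := by
  have hcard : Cardinal.mk (range f) ≤ Cardinal.continuum := by
    have hℝ : Cardinal.mk ℝ≥0 ≤ Cardinal.continuum :=
      Cardinal.mk_real ▸ Cardinal.mk_le_of_injective NNReal.coe_injective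
    simpa using Cardinal.mk_range_le_lift.trans (Cardinal.lift_le.2 hℝ)
  obtain ⟨u, hu⟩ := hbdd _ hcard
  obtain ⟨b, hub⟩ := exists_gt u
  exact ⟨b, fun s => (hu (mem_range_self s)).trans_lt hub⟩

section InitialSegmentTopology

variable {X : Type*} [LinearOrder X] [TopologicalSpace X]

theorem HasInitialSegmentTopology.isOpen_Iio (hX : HasInitialSegmentTopology X) (x : X) :
    IsOpen (Iio x) :=
  (hX _).2 (.inr (.inr ⟨x, rfl⟩))

theorem HasInitialSegmentTopology.continuousAt_of_forall_le (hX : HasInitialSegmentTopology X)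
    {α : Type*} [TopologicalSpace α] {f : α → X} {a : α} (h : ∀ b, f b ≤ f a) :
    ContinuousAt f a := by
  rw [ContinuousAt, tendsto_nhds]
  intro U hU ha
  rcases (hX U).1 hU with rfl | rfl | ⟨x, rfl⟩
  · exact absurd ha (notMem_empty _)
  · exact univ_mem
  · exact Eventually.of_forall fun b => (h b).trans_lt ha

noncomputable def jump (g : ℝ≥0 → X) (t : ℝ≥0) (b : X) (s : ℝ≥0) : X :=
  if s < t then g s else b

theorem HasInitialSegmentTopology.continuous_jump (hX : HasInitialSegmentTopology X)
    {g : ℝ≥0 → X} {t : ℝ≥0} {b : X} (hg : ∀ s < t, ContinuousAt g s)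
    (hgb : ∀ s < t, g s ≤ b) : Continuous (jump g t b) := by
  refine continuous_iff_continuousAt.2 fun s => ?_
  by_cases hs : s < t
  · refine (hg s hs).congr ?_
    filter_upwards [Iio_mem_nhds hs] with s' hs'
    simp only [jump, if_pos (show s' < t from hs')]
  · refine hX.continuousAt_of_forall_le fun s' => ?_
    simp only [jump, if_neg hs]
    split_ifs with h
    exacts [hgb s' h, le_rfl]

/-- At `t = 0` the jump is the starting point `m` itself, hence `x < m` is needed there. -/
theorem HasInitialSegmentTopology.exists_path_jump (hX : HasInitialSegmentTopology X)
    [NoMaxOrder X] (hbdd : ∀ Y : Set X, Cardinal.mk Y ≤ Cardinal.continuum → BddAbove Y)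
    {m : X} (g : ℝ≥0 → X) (t : ℝ≥0) (hg : ∀ s < t, ContinuousAt g s) (hg0 : 0 < t → g 0 = m)
    (x : X) (hx : t = 0 → x < m) :
    ∃ α : PathFrom X m, (∀ s < t, α.1 s = g s) ∧ ∃ b, x < b ∧ ∀ s, t ≤ s → α.1 s = b := by
  obtain ⟨b, hgb, hxb, hb0⟩ : ∃ b, (∀ s < t, g s ≤ b) ∧ x < b ∧ jump g t b 0 = m := by
    rcases eq_zero_or_pos t with rfl | ht
    · exact ⟨m, fun s hs => (not_lt_zero hs).elim, hx rfl, by simp [jump]⟩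
    · obtain ⟨b, hb⟩ := exists_forall_lt_of_bddAbove hbdd fun s => max (g s) x
      exact ⟨b, fun s _ => (le_max_left _ _).trans (hb s).le,
        (le_max_right _ _).trans_lt (hb 0), by simp [jump, ht, hg0 ht]⟩
  exact ⟨⟨jump g t b, hX.continuous_jump hg hgb, hb0⟩, fun s hs => if_pos hs,
    b, hxb, fun s hs => if_neg hs.not_gt⟩

end InitialSegmentTopology

section Evasion

variable {X : Type*} [TopologicalSpace X] {m l : X} {S : PathFrom X m → PathFrom X l}

structure Evasion (S : PathFrom X m → PathFrom X l) where
  time : ℝ≥0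
  path : PathFrom X m
  avoids : ∀ s < time, path.1 s ≠ (S path).1 s

instance : Preorder (Evasion S) where
  le p q := p.time ≤ q.time ∧ ∀ s < p.time, p.path.1 s = q.path.1 s
  le_refl _ := ⟨le_rfl, fun _ _ => rfl⟩
  le_trans _ _ _ hpq hqr :=
    ⟨hpq.1.trans hqr.1, fun s hs => (hpq.2 s hs).trans (hqr.2 s (hs.trans_le hpq.1))⟩

theorem Evasion.avoids_of_eqOn (hS : IsLionStrategy m l S) (p : Evasion S) {α : PathFrom X m}
    (h : ∀ s < p.time, α.1 s = p.path.1 s) : ∀ s < p.time, α.1 s ≠ (S α).1 s := by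
  intro s hs
  rw [h s hs, hS.2 α p.path p.time h s hs.le]
  exact p.avoids s hs

theorem Evasion.path_eq_of_isChain {c : Set (Evasion S)} (hc : IsChain (· ≤ ·) c)
    {p q : Evasion S} (hp : p ∈ c) (hq : q ∈ c) {s : ℝ≥0} (hsp : s < p.time)
    (hsq : s < q.time) :
    p.path.1 s = q.path.1 s := by
  rcases hc.total hp hq with h | h
  exacts [h.2 s hsp, (h.2 s hsq).symm]

open Classical in
/-- The union of the paths in a chain, on the union of their time intervals. -/
noncomputable def Evasion.glue (c : Set (Evasion S)) (s : ℝ≥0) : X :=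
  if h : ∃ p ∈ c, s < p.time then h.choose.path.1 s else m

theorem Evasion.glue_eq {c : Set (Evasion S)} (hc : IsChain (· ≤ ·) c) {p : Evasion S}
    (hp : p ∈ c) {s : ℝ≥0} (hs : s < p.time) : glue c s = p.path.1 s := by
  have h : ∃ p ∈ c, s < p.time := ⟨p, hp, hs⟩
  rw [glue, dif_pos h]
  exact path_eq_of_isChain hc h.choose_spec.1 hp h.choose_spec.2 hs

theorem Evasion.continuousAt_glue {c : Set (Evasion S)} (hc : IsChain (· ≤ ·) c)
    {p : Evasion S} (hp : p ∈ c) {s : ℝ≥0} (hs : s < p.time) : ContinuousAt (glue c) s := by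
  refine p.path.2.1.continuousAt.congr ?_
  filter_upwards [Iio_mem_nhds hs] with s' hs'
  exact (glue_eq hc hp hs').symm

theorem Evasion.bddAbove_time_of_isChain (hS : IsLionStrategy m l S) {c : Set (Evasion S)}
    (hc : IsChain (· ≤ ·) c) : BddAbove (time '' c) := by
  by_contra hunb
  have hex : ∀ s, ∃ p ∈ c, s < p.time := by simpa using not_bddAbove_iff.1 hunb
  have hglue0 : glue c 0 = m := by
    obtain ⟨p, hp, hp0⟩ := hex 0
    exact (glue_eq hc hp hp0).trans p.path.2.2
  let α : PathFrom X m := ⟨glue c, continuous_iff_continuousAt.2 fun s =>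
    let ⟨_, hp, hs⟩ := hex s; continuousAt_glue hc hp hs, hglue0⟩
  obtain ⟨t, hcaught⟩ := hS.1 α
  obtain ⟨p, hp, ht⟩ := hex t
  exact p.avoids_of_eqOn hS (fun s hs => glue_eq hc hp hs) t ht hcaught.symm

theorem Evasion.bddAbove_of_isChain [LinearOrder X] (hX : HasInitialSegmentTopology X)
    [NoMaxOrder X]
    (hbdd : ∀ Y : Set X, Cardinal.mk Y ≤ Cardinal.continuum → BddAbove Y) (hlm : l < m)
    (hS : IsLionStrategy m l S) {c : Set (Evasion S)} (hc : IsChain (· ≤ ·) c) :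
    BddAbove c := by
  have hT := bddAbove_time_of_isChain hS hc
  set T := sSup (time '' c)
  have hlt : ∀ s < T, ∃ p ∈ c, s < p.time := fun s hs => by
    simpa using exists_lt_of_lt_csSup' hs
  have hglue0 : 0 < T → glue c 0 = m := fun hT0 => by
    obtain ⟨p, hp, hp0⟩ := hlt 0 hT0
    exact (glue_eq hc hp hp0).trans p.path.2.2
  obtain ⟨α, hα, -⟩ := hX.exists_path_jump hbdd (glue c) T
    (fun s hs => let ⟨_, hp, hsp⟩ := hlt s hs; continuousAt_glue hc hp hsp) hglue0 l
    (fun _ => hlm)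
  have hαp : ∀ p ∈ c, ∀ s < p.time, α.1 s = p.path.1 s := fun p hp s hs =>
    (hα s (hs.trans_le (le_csSup hT ⟨p, hp, rfl⟩))).trans (glue_eq hc hp hs)
  refine ⟨⟨T, α, fun s hs => ?_⟩, fun p hp => ⟨le_csSup hT ⟨p, hp, rfl⟩, fun s hs => ?_⟩⟩
  · obtain ⟨p, hp, hsp⟩ := hlt s hs
    exact p.avoids_of_eqOn hS (hαp p hp) s hsp
  · exact (hαp p hp s hs).symm

theorem Evasion.not_isMax [LinearOrder X] (hX : HasInitialSegmentTopology X) [NoMaxOrder X]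
    (hbdd : ∀ Y : Set X, Cardinal.mk Y ≤ Cardinal.continuum → BddAbove Y) (hlm : l < m)
    (hS : IsLionStrategy m l S) (p : Evasion S) : ¬ IsMax p := by
  obtain ⟨α, hαp, b, hb, hαb⟩ := hX.exists_path_jump hbdd p.path.1 p.time
    (fun _ _ => p.path.2.1.continuousAt) (fun _ => p.path.2.2) ((S p.path).1 p.time)
    fun h => by rw [h, (S p.path).2.2]; exact hlm
  have hlion : (S α).1 p.time < b := by
    rwa [hS.2 α p.path p.time hαp p.time le_rfl]
  obtain ⟨u, hpu, hu⟩ := exists_Ico_subset_of_mem_nhds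
    ((S α).2.1.continuousAt.eventually_mem ((hX.isOpen_Iio b).mem_nhds hlion))
    ⟨p.time + 1, lt_add_one _⟩
  let q : Evasion S := ⟨u, α, fun s hs => by
    by_cases hsp : s < p.time
    · exact p.avoids_of_eqOn hS hαp s hsp
    · rw [hαb s (not_lt.1 hsp)]
      exact (hu ⟨not_lt.1 hsp, hs⟩ : (S α).1 s < b).ne'⟩
  exact fun hmax => hpu.not_ge (hmax (show p ≤ q from ⟨hpu.le, fun s hs => (hαp s hs).symm⟩)).1

end Evasion

theorem stmt_7_general {X : Type*} [LinearOrder X] [TopologicalSpace X]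
    (hopen : ∀ U : Set X, IsOpen U ↔ U = ∅ ∨ U = Set.univ ∨ ∃ x : X, U = Set.Iio x)
    (hnomax : ¬ ∃ x : X, ∀ y : X, y ≤ x)
    (hbdd : ∀ Y : Set X, Cardinal.mk Y ≤ Cardinal.continuum → BddAbove Y)
    (l m : X) (hlm : l < m) :
    ¬ ∃ S : PathFrom X m → PathFrom X l, IsLionStrategy m l S := by
  rintro ⟨S, hS⟩
  have : NoMaxOrder X := ⟨fun x => by simpa using not_exists.1 hnomax x⟩
  obtain ⟨p, hp⟩ := zorn_le fun c hc => Evasion.bddAbove_of_isChain hopen hbdd hlm hS hc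
  exact Evasion.not_isMax hopen hbdd hlm hS p hp

/-- Let `X` be a well-ordered set without maximum, with the topology whose
proper open sets are the strict initial segments, in which every subset of cardinality at
most the continuum is bounded above. With the lion starting at the minimum `l` and the man
at the second element `m`, the lion has no strategy. -/
theorem stmt_7 {X : Type*} [LinearOrder X] [TopologicalSpace X]
    (hwo : IsWellOrder X (· < ·))
    (hopen : ∀ U : Set X, IsOpen U ↔ U = ∅ ∨ U = Set.univ ∨ ∃ x : X, U = Set.Iio x)
    (hnomax : ¬ ∃ x : X, ∀ y : X, y ≤ x)
    (hbdd : ∀ Y : Set X, Cardinal.mk Y ≤ Cardinal.continuum → BddAbove Y)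
    (l m : X) (hl : ∀ y : X, l ≤ y) (hlm : l < m) (hm : ∀ y : X, l < y → m ≤ y) :
    ¬ ∃ S : PathFrom X m → PathFrom X l, IsLionStrategy m l S :=
  stmt_7_general hopen hnomax hbdd l m hlm
end

section
/- Let X be a well-ordered set without maximum with the topology whose proper open sets are the strict initial segments X_{<x}. Then for any starting points m, l ∈ X, the man does not have a strategy in the lion-and-man game on X. -/
/-!
The man's position at time `t` depends only on the lion's path before `t`. So if the lion has
a family of paths that agree before time `t` and can end at any prescribed point at time `t`,
it may first run the common part, read off where the man will be at time `t`, and be there.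
In the initial-segment topology such paths exist: the minimum `x₀` lies in every nonempty open
set, so a path may jump from `l` down to `x₀` and later up to any point `c`.
-/

open Set

theorem not_isManStrategy_of_agree_before {X : Type*} [TopologicalSpace X] {m l : X}
    {t : NNReal} (β : X → PathFrom X l) (hagree : ∀ c c', ∀ s < t, (β c).1 s = (β c').1 s)
    (hend : ∀ c, (β c).1 t = c) (S : PathFrom X l → PathFrom X m) : ¬ IsManStrategy m l S := by
  rintro ⟨hevade, hlookahead⟩
  set c := (S (β m)).1 t
  have hcaught : (S (β c)).1 t = (β c).1 t := by
    rw [hlookahead (β c) (β m) t (hagree c m) t le_rfl, hend]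
  exact hevade (β c) t hcaught

def IsInitialSegmentTopology (X : Type*) [Preorder X] [TopologicalSpace X] : Prop :=
  ∀ U : Set X, IsOpen U ↔ U = ∅ ∨ U = univ ∨ ∃ x : X, U = Iio x

namespace IsInitialSegmentTopology

variable {X Y : Type*} [LinearOrder X] [TopologicalSpace X] [TopologicalSpace Y]

theorem continuous_of_isOpen_preimage_Iio (hX : IsInitialSegmentTopology X) {f : Y → X}
    (hf : ∀ x, IsOpen (f ⁻¹' Iio x)) : Continuous f := by
  refine continuous_def.2 fun U hU => ?_
  rcases (hX U).1 hU with rfl | rfl | ⟨x, rfl⟩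
  exacts [isOpen_empty, isOpen_univ, hf x]

theorem continuous_max (hX : IsInitialSegmentTopology X) {f g : Y → X} (hf : Continuous f)
    (hg : Continuous g) : Continuous fun y => max (f y) (g y) := by
  refine hX.continuous_of_isOpen_preimage_Iio fun x => ?_
  have hIio : IsOpen (Iio x) := (hX _).2 (Or.inr (Or.inr ⟨x, rfl⟩))
  simpa only [preimage, mem_Iio, max_lt_iff, ofPred_and] using
    (hIio.preimage hf).inter (hIio.preimage hg)

theorem continuous_ite_of_isClosed (hX : IsInitialSegmentTopology X) {x₀ : X}
    (hx₀ : ∀ y, x₀ ≤ y) (a : X) {p : Y → Prop} [DecidablePred p] (hp : IsClosed {y | p y}) :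
    Continuous fun y => if p y then a else x₀ := by
  refine hX.continuous_of_isOpen_preimage_Iio fun x => ?_
  by_cases hax : a < x
  · convert isOpen_univ
    exact eq_univ_of_forall fun y => by
      by_cases hy : p y <;> simp [hy, hax, (hx₀ a).trans_lt hax]
  by_cases hx₀x : x₀ < x
  · convert hp.isOpen_compl
    ext y
    by_cases hy : p y <;> simp [hy, hax, hx₀x]
  · convert isOpen_empty
    exact eq_empty_of_forall_notMem fun y => by by_cases hy : p y <;> simp [hy, hax, hx₀x]

end IsInitialSegmentTopology

/-- When `x₀` is the minimum: `l` at time `0`, `x₀` on `(0, 1)` and `c` from time `1` on. -/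
noncomputable def jumpPath {X : Type*} [LinearOrder X] (x₀ l c : X) (t : NNReal) : X :=
  max (if t = 0 then l else x₀) (if 1 ≤ t then c else x₀)

theorem stmt_8_general {X : Type*} [LinearOrder X] [TopologicalSpace X]
    (hwo : IsWellOrder X (· < ·))
    (hopen : ∀ U : Set X, IsOpen U ↔ U = ∅ ∨ U = Set.univ ∨ ∃ x : X, U = Set.Iio x)
    (m l : X) :
    ¬ ∃ S : PathFrom X l → PathFrom X m, IsManStrategy m l S := by
  have hX : IsInitialSegmentTopology X := hopen
  obtain ⟨x₀, -, hmin⟩ := hwo.wf.has_min univ ⟨m, trivial⟩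
  have hx₀ : ∀ y, x₀ ≤ y := fun y => not_lt.1 (hmin y trivial)
  let β (c : X) : PathFrom X l :=
    ⟨jumpPath x₀ l c,
      hX.continuous_max (hX.continuous_ite_of_isClosed hx₀ l (p := (· = 0)) isClosed_singleton)
        (hX.continuous_ite_of_isClosed hx₀ c isClosed_Ici),
      by simp [jumpPath, hx₀ l]⟩
  rintro ⟨S, hS⟩
  refine not_isManStrategy_of_agree_before (t := 1) β (fun c c' s hs => ?_) (fun c => ?_) S hS
  · simp [β, jumpPath, not_le.2 hs]
  · simp [β, jumpPath, hx₀ c]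

/-- Let `X` be a well-ordered set without maximum, with the topology whose
proper open sets are the strict initial segments. Then for any starting points the man
has no strategy. -/
theorem stmt_8 {X : Type*} [LinearOrder X] [TopologicalSpace X]
    (hwo : IsWellOrder X (· < ·))
    (hopen : ∀ U : Set X, IsOpen U ↔ U = ∅ ∨ U = Set.univ ∨ ∃ x : X, U = Set.Iio x)
    (hnomax : ¬ ∃ x : X, ∀ y : X, y ≤ x) (m l : X) :
    ¬ ∃ S : PathFrom X l → PathFrom X m, IsManStrategy m l S :=
  stmt_8_general hwo hopen m l
end

section
/- Let X be a path-connected Alexandrov space (arbitrary intersections of opens are open) containing a countable subset Y whose open hull ⋃_{y∈Y} U_y equals X. Then for any starting points m, l ∈ X, the lion has a strategy in the lion-and-man game on X. -/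
/-!
In an Alexandrov space the minimal open set `U_y = nhdsKer {y}` is the smallest neighbourhood
of `y`, so a path that takes all its values in `U_y` is continuous at every time at which it
sits at `y`. Hence a lion waiting at `y` may, the moment the man is in `U_y`, jump onto him and
shadow him while he stays in `U_y`, and wait at `y` otherwise. Since the man's position at
time `t` is not determined by his past (limits are not unique), the lion commits to one such
shadowing path, chosen from a set that depends only on the germ of the man's path just after
the lion's arrival.

The lion patrols the stations `l, f 0, f 1, …`, reaching the `k`-th at time `k / (k + 1)`,
where every `y ∈ Y` occurs infinitely often among the `f k`. The man's position at time `1`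
lies in some `U_y`, and so does his position at every arrival time close to `1`; in
particular he is in `U_y` when the lion arrives at one of the visits to `y`, and the lion
ambushes him there.
-/

open Set Filter Topology
open scoped NNReal

namespace LionAndMan

lemma exists_seq_frequently_eq {α : Type*} {Y : Set α} (hY : Y.Countable) (hne : Y.Nonempty) :
    ∃ f : ℕ → α, ∀ y ∈ Y, ∃ᶠ k in atTop, f k = y := by
  obtain ⟨g, rfl⟩ := hY.exists_eq_range hne
  refine ⟨fun k => g k.unpair.1, ?_⟩
  rintro _ ⟨i, rfl⟩
  exact frequently_atTop.2 fun N => ⟨Nat.pair i N, Nat.right_le_pair i N, by simp⟩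

noncomputable section

variable {X : Type*} [TopologicalSpace X]

lemma continuous_piecewise_of_mapsTo_nhdsKer [AlexandrovDiscrete X] {T : Type*}
    [TopologicalSpace T] {f : T → X} {O : Set T} [DecidablePred (· ∈ O)] {y : X}
    (hf : Continuous f) (hO : IsOpen O) (hfO : MapsTo f O (nhdsKer {y})) :
    Continuous (O.piecewise f fun _ => y) := by
  have hmem : ∀ t, O.piecewise f (fun _ => y) t ∈ nhdsKer {y} := fun t => by
    by_cases ht : t ∈ O
    · simpa [ht] using hfO ht
    · simpa [ht] using subset_nhdsKer (mem_singleton y)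
  refine continuous_iff_continuousAt.2 fun t => ?_
  by_cases ht : t ∈ O
  · exact hf.continuousAt.congr <|
      eventually_of_mem (hO.mem_nhds ht) fun s hs => (piecewise_eq_of_mem _ _ _ hs).symm
  · rw [ContinuousAt, piecewise_eq_of_notMem _ _ _ ht, ← principal_nhdsKer_singleton y]
    exact tendsto_principal.2 (Eventually.of_forall hmem)

section Ambush

def ambushPaths (y : X) (r : ℝ≥0) (β α : ℝ≥0 → X) : Set (ℝ≥0 → X) :=
  {δ | Continuous δ ∧ EqOn δ β (Iic r) ∧ ∀ᶠ u in 𝓝[>] r, α u ∈ nhdsKer {y} → δ u = α u}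

variable {y : X} {r T : ℝ≥0} {β α α' : ℝ≥0 → X}

lemma ambushPaths_nonempty [AlexandrovDiscrete X] (hβ : Continuous β) (hβr : β r = y)
    (hα : Continuous α) : (ambushPaths y r β α).Nonempty := by
  classical
  set O := Ioi r ∩ α ⁻¹' nhdsKer {y}
  have hshadow : Continuous (O.piecewise α fun _ => y) :=
    continuous_piecewise_of_mapsTo_nhdsKer hα (isOpen_Ioi.inter (isOpen_nhdsKer.preimage hα))
      fun _ hu => hu.2
  refine ⟨fun t => if t ≤ r then β t else O.piecewise α (fun _ => y) t, ?_,
    fun t ht => if_pos ht, ?_⟩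
  · refine hβ.if_le hshadow continuous_id continuous_const fun t ht => ?_
    have hO : t ∉ O := fun h => (lt_irrefl r) (ht ▸ h.1)
    rw [piecewise_eq_of_notMem _ _ _ hO, ht, hβr]
  · filter_upwards [self_mem_nhdsWithin] with u (hu : r < u) hαu
    simp only [if_neg (not_le.2 hu), piecewise_eq_of_mem _ _ _ (show u ∈ O from ⟨hu, hαu⟩)]

lemma ambushPaths_congr (h : ∀ s < T, α s = α' s) (hr : r < T) :
    ambushPaths y r β α = ambushPaths y r β α' := by
  have hag : ∀ᶠ u in 𝓝[>] r, α u = α' u :=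
    nhdsWithin_le_nhds ((eventually_lt_nhds hr).mono h)
  ext δ
  simp only [ambushPaths, mem_ofPred_eq]
  rw [eventually_congr (hag.mono fun u hu => by rw [hu])]

variable [Nonempty X]

def ambush (y : X) (r : ℝ≥0) (β α : ℝ≥0 → X) : ℝ≥0 → X :=
  Classical.epsilon (· ∈ ambushPaths y r β α)

lemma ambush_mem [AlexandrovDiscrete X] (hβ : Continuous β) (hβr : β r = y)
    (hα : Continuous α) : ambush y r β α ∈ ambushPaths y r β α :=
  Classical.epsilon_spec (ambushPaths_nonempty hβ hβr hα)

lemma ambush_congr (h : ∀ s < T, α s = α' s) (hr : r < T) :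
    ambush y r β α = ambush y r β α' := by
  rw [ambush, ambush, ambushPaths_congr h hr]

lemma exists_ambush_eq [AlexandrovDiscrete X] (hβ : Continuous β) (hβr : β r = y)
    (hα : Continuous α) (hy : α r ∈ nhdsKer {y}) : ∃ u, ambush y r β α u = α u := by
  have hnear : ∀ᶠ u in 𝓝[>] r, α u ∈ nhdsKer {y} :=
    nhdsWithin_le_nhds (hα.continuousAt.eventually_mem (isOpen_nhdsKer.mem_nhds hy))
  exact (((ambush_mem hβ hβr hα).2.2.and hnear).mono fun _ hu => hu.1 hu.2).exists

end Ambush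

def arrivalTime (k : ℕ) : ℝ≥0 := k / (k + 1)

lemma arrivalTime_strictMono : StrictMono arrivalTime := by
  refine strictMono_nat_of_lt_succ fun k => ?_
  rw [← NNReal.coe_lt_coe, arrivalTime, arrivalTime]
  push_cast
  rw [div_lt_div_iff₀ (by positivity) (by positivity)]
  nlinarith

lemma tendsto_arrivalTime : Tendsto arrivalTime atTop (𝓝 1) :=
  tendsto_natCast_div_add_atTop 1

section Stations

variable (f : ℕ → X) (l : X)

def RecurrentCover : Prop :=
  ∀ x, ∃ y, x ∈ nhdsKer {y} ∧ ∃ᶠ k in atTop, f k = y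

def patrolPoint : ℕ → X
  | 0 => l
  | k + 1 => f k

def ambushIndex (α : ℝ≥0 → X) : ℕ :=
  sInf {k | α (arrivalTime k) ∈ nhdsKer {patrolPoint f l k}}

variable {f l} [AlexandrovDiscrete X] {α α' : ℝ≥0 → X}

lemma exists_sighting (hf : RecurrentCover f) (hα : Continuous α) :
    ∃ k, α (arrivalTime k) ∈ nhdsKer {patrolPoint f l k} := by
  obtain ⟨y, hy, hfreq⟩ := hf (α 1)
  have hnear : ∀ᶠ k in atTop, α (arrivalTime (k + 1)) ∈ nhdsKer {y} :=
    ((hα.tendsto 1).comp ((tendsto_add_atTop_iff_nat 1).2 tendsto_arrivalTime)).eventually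
      (isOpen_nhdsKer.mem_nhds hy)
  obtain ⟨k, hk, hαk⟩ := (hfreq.and_eventually hnear).exists
  exact ⟨k + 1, by rwa [patrolPoint, hk]⟩

lemma ambushIndex_eq_of_lt (hf : RecurrentCover f) (hα : Continuous α) (hα' : Continuous α')
    {T : ℝ≥0} (h : ∀ s < T, α s = α' s)
    (hT : arrivalTime (ambushIndex f l α) < T) : ambushIndex f l α' = ambushIndex f l α := by
  have hsame : ∀ k, arrivalTime k < T → (α (arrivalTime k) ∈ nhdsKer {patrolPoint f l k} ↔
      α' (arrivalTime k) ∈ nhdsKer {patrolPoint f l k}) := fun k hk => by rw [h _ hk]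
  have hle : ambushIndex f l α' ≤ ambushIndex f l α :=
    Nat.sInf_le ((hsame _ hT).1 (Nat.sInf_mem (exists_sighting hf hα)))
  refine hle.antisymm (Nat.sInf_le ((hsame _ ?_).2 (Nat.sInf_mem (exists_sighting hf hα'))))
  exact (arrivalTime_strictMono.monotone hle).trans_lt hT

end Stations

section Patrol

variable [PathConnectedSpace X] (f : ℕ → X) (l : X)

def leg (k : ℕ) (t : ℝ≥0) : X :=
  (PathConnectedSpace.somePath (patrolPoint f l k) (patrolPoint f l (k + 1))).extend
    (((t : ℝ) - arrivalTime k) / ((arrivalTime (k + 1) : ℝ) - arrivalTime k))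

def patrol : ℕ → ℝ≥0 → X
  | 0, _ => l
  | k + 1, t => if t ≤ arrivalTime k then patrol k t else leg f l k t

variable {f l}

lemma leg_of_le {k : ℕ} {t : ℝ≥0} (ht : t ≤ arrivalTime k) :
    leg f l k t = patrolPoint f l k := by
  refine Path.extend_of_le_zero _ (div_nonpos_of_nonpos_of_nonneg ?_ ?_)
  · simpa using ht
  · simpa using (arrivalTime_strictMono k.lt_succ_self).le

lemma leg_of_ge {k : ℕ} {t : ℝ≥0} (ht : arrivalTime (k + 1) ≤ t) :
    leg f l k t = patrolPoint f l (k + 1) := by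
  have hpos : (0 : ℝ) < arrivalTime (k + 1) - arrivalTime k :=
    sub_pos.2 (NNReal.coe_lt_coe.2 (arrivalTime_strictMono k.lt_succ_self))
  refine Path.extend_of_one_le _ ((one_le_div hpos).2 ?_)
  simpa using ht

lemma continuous_leg (k : ℕ) : Continuous (leg f l k) :=
  Path.continuous_extend _ |>.comp (by fun_prop)

lemma patrol_of_ge {k : ℕ} {t : ℝ≥0} (ht : arrivalTime k ≤ t) :
    patrol f l k t = patrolPoint f l k := by
  cases k with
  | zero => rfl
  | succ k =>
    rw [patrol, if_neg (not_le.2 ((arrivalTime_strictMono k.lt_succ_self).trans_le ht)),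
      leg_of_ge ht]

lemma patrol_apply_zero (k : ℕ) : patrol f l k 0 = l := by
  induction k with
  | zero => rfl
  | succ k ih => rw [patrol, if_pos zero_le, ih]

lemma continuous_patrol (k : ℕ) : Continuous (patrol f l k) := by
  induction k with
  | zero => exact continuous_const
  | succ k ih =>
    refine ih.if_le (continuous_leg k) continuous_id continuous_const fun t ht => ?_
    rw [patrol_of_ge ht.ge, leg_of_le ht.le]

lemma patrol_eq_of_le {k k' : ℕ} (hk : k ≤ k') {t : ℝ≥0} (ht : t ≤ arrivalTime k) :
    patrol f l k' t = patrol f l k t := by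
  induction k', hk using Nat.le_induction with
  | base => rfl
  | succ n hkn ih =>
    rw [patrol, if_pos (ht.trans (arrivalTime_strictMono.monotone hkn)), ih]

variable (f l)

def lion (α : ℝ≥0 → X) : ℝ≥0 → X :=
  ambush (patrolPoint f l (ambushIndex f l α)) (arrivalTime (ambushIndex f l α))
    (patrol f l (ambushIndex f l α)) α

variable {f l} [AlexandrovDiscrete X] {α α' : ℝ≥0 → X}

lemma lion_mem (hα : Continuous α) :
    lion f l α ∈ ambushPaths (patrolPoint f l (ambushIndex f l α))
      (arrivalTime (ambushIndex f l α)) (patrol f l (ambushIndex f l α)) α :=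
  ambush_mem (continuous_patrol _) (patrol_of_ge le_rfl) hα

lemma continuous_lion (hα : Continuous α) : Continuous (lion f l α) :=
  (lion_mem hα).1

lemma lion_apply_zero (hα : Continuous α) : lion f l α 0 = l :=
  ((lion_mem hα).2.1 (mem_Iic.2 zero_le)).trans (patrol_apply_zero _)

lemma exists_lion_eq (hf : RecurrentCover f) (hα : Continuous α) : ∃ u, lion f l α u = α u :=
  exists_ambush_eq (continuous_patrol _) (patrol_of_ge le_rfl) hα
    (Nat.sInf_mem (exists_sighting hf hα))

lemma lion_eq_of_ambushIndex_lt (hf : RecurrentCover f) (hα : Continuous α)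
    (hα' : Continuous α') {T : ℝ≥0} (h : ∀ s < T, α s = α' s)
    (hT : arrivalTime (ambushIndex f l α) < T) : lion f l α = lion f l α' := by
  rw [lion, lion, ambushIndex_eq_of_lt hf hα hα' h hT, ambush_congr h hT]

lemma lion_eq_of_forall_lt_eq (hf : RecurrentCover f) (hα : Continuous α)
    (hα' : Continuous α') {T : ℝ≥0} (h : ∀ s < T, α s = α' s)
    {s : ℝ≥0} (hs : s ≤ T) : lion f l α s = lion f l α' s := by
  by_cases hT : arrivalTime (ambushIndex f l α) < T
  · rw [lion_eq_of_ambushIndex_lt hf hα hα' h hT]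
  by_cases hT' : arrivalTime (ambushIndex f l α') < T
  · rw [lion_eq_of_ambushIndex_lt hf hα' hα (fun s hs => (h s hs).symm) hT']
  have hsK := hs.trans (not_lt.1 hT)
  have hsK' := hs.trans (not_lt.1 hT')
  rw [(lion_mem hα).2.1 hsK, (lion_mem hα').2.1 hsK']
  rcases le_total (ambushIndex f l α) (ambushIndex f l α') with hK | hK
  · exact (patrol_eq_of_le hK hsK).symm
  · exact patrol_eq_of_le hK hsK'

end Patrol

end

end LionAndMan

open LionAndMan in
/-- In a path-connected Alexandrov space containing a countable subset
whose open hull is the whole space, the lion has a strategy for any starting points. -/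
theorem stmt_10 {X : Type*} [TopologicalSpace X] [AlexandrovDiscrete X]
    [PathConnectedSpace X] (Y : Set X) (hY : Y.Countable)
    (hhull : ⋃ y ∈ Y, ⋂₀ {U : Set X | IsOpen U ∧ y ∈ U} = Set.univ)
    (m l : X) : ∃ S : PathFrom X m → PathFrom X l, IsLionStrategy m l S := by
  have hcov : ∀ x, ∃ y ∈ Y, x ∈ nhdsKer {y} := fun x => by
    simpa [nhdsKer_def] using eq_univ_iff_forall.1 hhull x
  obtain ⟨y₀, hy₀, -⟩ := hcov m
  obtain ⟨f, hf⟩ := exists_seq_frequently_eq hY ⟨y₀, hy₀⟩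
  have hvisit : RecurrentCover f := fun x => by
    obtain ⟨y, hy, hxy⟩ := hcov x
    exact ⟨y, hxy, hf y hy⟩
  refine ⟨fun α => ⟨lion f l α.1, continuous_lion α.2.1, lion_apply_zero α.2.1⟩,
    fun α => exists_lion_eq hvisit α.2.1, fun α α' _ h _ hs => ?_⟩
  exact lion_eq_of_forall_lt_eq hvisit α.2.1 α'.2.1 h hs
end

section
/- Let β : [0,∞) → D² be a continuous path. Then there exists a continuous path α : [0,∞) → S¹ ⊆ D² with α(0) = 1 such that whenever |β(t)| = 1, α(t) = -β(t); in particular if additionally α(t) = 1 whenever |β(t)| ≤ 1/2 and α is constructed as α(t) = e^{2πiθ(t)} with θ(t) = (2|β(t)|−1)(ω(t)+1/2) for |β(t)| ≥ 1/2 (ω a continuous angular lifting of the radial projection of β on β⁻¹(D²∖{0})), then α(t) ≠ β(t) for all t ≥ 0. -/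
open Complex Topology

theorem ContinuousMap.exists_exp_lift {A : Type*} [TopologicalSpace A] [SimplyConnectedSpace A]
    [LocallyPathConnectedSpace A] (f : C(A, ℂ)) (hf : ∀ a, f a ≠ 0) :
    ∃ L : C(A, ℂ), ∀ a, exp (L a) = f a := by
  obtain ⟨a₀⟩ := (inferInstance : Nonempty A)
  obtain ⟨L, -, hL⟩ :=
    (isCoveringMapOn_exp.existsUnique_continuousMap_lifts f (exp_log (hf a₀)) hf).exists
  exact ⟨L, congrFun hL⟩

theorem Convex.exists_exp_lift {E : Type*} [AddCommGroup E] [Module ℝ E] [TopologicalSpace E]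
    [IsTopologicalAddGroup E] [ContinuousSMul ℝ E] [LocallyConvexSpace ℝ E] {s : Set E}
    (hs : Convex ℝ s) {f : E → ℂ} (hf : ContinuousOn f s) (hf0 : ∀ x ∈ s, f x ≠ 0) :
    ∃ L : E → ℂ, ContinuousOn L s ∧ ∀ x ∈ s, exp (L x) = f x := by
  classical
  rcases s.eq_empty_or_nonempty with rfl | hne
  · exact ⟨0, continuousOn_empty _, fun _ => False.elim⟩
  have := hs.contractibleSpace hne
  have := hs.locallyPathConnectedSpace
  obtain ⟨L, hL⟩ :=
    ContinuousMap.exists_exp_lift ⟨s.domRestrict f, hf.domRestrict⟩ fun x => hf0 x x.2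
  refine ⟨fun x => if hx : x ∈ s then L ⟨x, hx⟩ else 0, ?_,
    fun x hx => by simpa [hx] using hL ⟨x, hx⟩⟩
  rw [continuousOn_iff_continuous_domRestrict]
  convert L.continuous using 1
  funext x
  simp [x.2]

theorem IsOpen.exists_continuousOn_lift_of_connectedComponentIn {X E Y : Type*}
    [TopologicalSpace X] [LocallyConnectedSpace X] [TopologicalSpace E] [Nonempty E]
    {p : E → Y} {f : X → Y} {U : Set X} (hU : IsOpen U)
    (h : ∀ x ∈ U, ∃ g : X → E, ContinuousOn g (connectedComponentIn U x) ∧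
      ∀ y ∈ connectedComponentIn U x, p (g y) = f y) :
    ∃ g : X → E, ContinuousOn g U ∧ ∀ x ∈ U, p (g x) = f x := by
  classical
  -- one lift per component, so that nearby points use the same lift
  let G : Set X → X → E := fun C =>
    if hC : ∃ g : X → E, ContinuousOn g C ∧ ∀ y ∈ C, p (g y) = f y then hC.choose
    else Classical.arbitrary _
  have hG : ∀ x ∈ U, ContinuousOn (G (connectedComponentIn U x)) (connectedComponentIn U x) ∧
      ∀ y ∈ connectedComponentIn U x, p (G (connectedComponentIn U x) y) = f y := fun x hx => by
    simp only [G, dif_pos (h x hx)]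
    exact (h x hx).choose_spec
  refine ⟨fun x => G (connectedComponentIn U x) x, fun x hx => ?_,
    fun x hx => (hG x hx).2 x (mem_connectedComponentIn hx)⟩
  have hC : connectedComponentIn U x ∈ 𝓝 x :=
    hU.connectedComponentIn.mem_nhds (mem_connectedComponentIn hx)
  have hloc : G (connectedComponentIn U x) =ᶠ[𝓝 x] fun y => G (connectedComponentIn U y) y := by
    filter_upwards [hC] with y hy
    rw [← connectedComponentIn_eq hy]
  exact (((hG x hx).1.continuousAt hC).congr hloc).continuousWithinAt

theorem Real.exists_exp_lift_of_isOpen {U : Set ℝ} (hU : IsOpen U) {f : ℝ → ℂ}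
    (hf : ContinuousOn f U) (hf0 : ∀ x ∈ U, f x ≠ 0) :
    ∃ L : ℝ → ℂ, ContinuousOn L U ∧ ∀ x ∈ U, Complex.exp (L x) = f x :=
  hU.exists_continuousOn_lift_of_connectedComponentIn fun x _ =>
    isPreconnected_connectedComponentIn.convex.exists_exp_lift
      (hf.mono (connectedComponentIn_subset U x))
      fun y hy => hf0 y (connectedComponentIn_subset U x hy)

theorem Complex.exp_im_mul_I_of_norm_exp_eq_one {z : ℂ} (h : ‖exp z‖ = 1) :
    exp (z.im * I) = exp z := by
  rw [norm_exp] at h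
  conv_rhs => rw [← re_add_im z, exp_add, ← ofReal_exp, h, ofReal_one, one_mul]

theorem stmt_16_general (β : NNReal → ℂ) (hβc : Continuous β) (hβ0 : β 0 = 0) :
    ∃ α : NNReal → ℂ, Continuous α ∧ α 0 = 1 ∧ (∀ t, ‖α t‖ = 1) ∧
      (∀ t, ‖β t‖ = 1 → α t = -β t) ∧ ∀ t, α t ≠ β t := by
  set U : Set NNReal := {t | β t ≠ 0}
  have hβc' : Continuous fun x : ℝ => β x.toNNReal := hβc.comp continuous_real_toNNReal
  obtain ⟨L, hLc, hL⟩ := Real.exists_exp_lift_of_isOpen (isOpen_ne_fun hβc' continuous_const)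
    hβc'.continuousOn fun _ hx => hx
  have hLU : ContinuousOn (fun t : NNReal => L t) U :=
    hLc.comp NNReal.continuous_coe.continuousOn fun t (ht : β t ≠ 0) => by simpa using ht
  have hLβ : ∀ t ∈ U, exp (L t) = β t := fun t (ht : β t ≠ 0) => by
    simpa using hL t (by simpa using ht)
  set F : NNReal → ℝ := fun t => max (2 * ‖β t‖ - 1) 0
  have hFc : Continuous F := by fun_prop
  have hsuppF : Function.support F ⊆ {t | 1 / 2 ≤ ‖β t‖} := fun t ht =>
    show 1 / 2 ≤ ‖β t‖ from le_of_not_gt fun h => ht (max_eq_right (by linarith))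
  have hhalfU : {t | 1 / 2 ≤ ‖β t‖} ⊆ U := fun t ht h0 => by norm_num [h0] at ht
  set θ : NNReal → ℝ := fun t => F t * ((L t).im + Real.pi)
  have hθ : Continuous θ :=
    (hFc.continuousOn.mul ((continuous_im.comp_continuousOn hLU).add continuousOn_const))
      |>.continuous_of_tsupport_subset (isOpen_ne_fun hβc continuous_const)
      (tsupport_mul_subset_left.trans <|
        (closure_minimal hsuppF (isClosed_le continuous_const hβc.norm)).trans hhalfU)
  have hanti : ∀ t, ‖β t‖ = 1 → exp (θ t * I) = -β t := by
    intro t ht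
    have hβt := hLβ t (hhalfU (by norm_num [ht]))
    have hF1 : F t = 1 := by norm_num [F, ht]
    rw [show θ t = (L t).im + Real.pi by simp [θ, hF1], ofReal_add, add_mul, exp_add,
      exp_pi_mul_I, exp_im_mul_I_of_norm_exp_eq_one (by rw [hβt, ht]), hβt, mul_neg_one]
  refine ⟨fun t => exp (θ t * I), by fun_prop, by simp [θ, F, hβ0],
    fun t => norm_exp_ofReal_mul_I _, hanti, fun t hαβ => ?_⟩
  have h1 : ‖β t‖ = 1 := hαβ ▸ norm_exp_ofReal_mul_I _
  have h2 : β t = 0 := by linear_combination (-1 / 2 : ℂ) * (hanti t h1).symm.trans hαβ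
  norm_num [h2] at h1

/-- For any continuous lion path `β` in the closed unit disk starting at the
center, there is a continuous path `α` on the boundary circle starting at `1` which is
antipodal to `β` whenever `β` is on the boundary and which never meets `β`. -/
theorem stmt_16 (β : NNReal → ℂ) (hβc : Continuous β) (hβ0 : β 0 = 0)
    (hβ : ∀ t, ‖β t‖ ≤ 1) :
    ∃ α : NNReal → ℂ, Continuous α ∧ α 0 = 1 ∧ (∀ t, ‖α t‖ = 1) ∧
      (∀ t, ‖β t‖ = 1 → α t = -β t) ∧ ∀ t, α t ≠ β t :=
  stmt_16_general β hβc hβ0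
end

section
/- In the circle S¹ with antipodal starting points m = 1 and l = -1, both players have strategies in the lion-and-man game: the lion has a strategy since S¹ is path-connected Hausdorff, and the man has a strategy since the antipodal map x ↦ -x is a continuous fixed-point-free self-map of the Hausdorff space S¹ sending l to m. -/
/-! The lion first walks along a path to the man's starting point and then replays the man's
path at double speed, `β s = α (min (2s - 1) s)` for `s ≥ 1/2`, so it catches him at time `1`.
The man plays `f ∘ β` for a fixed-point-free map `f` (here `z ↦ -z`). Both strategies only
look at the opponent's past up to and including the present instant; since paths are continuous
and the space is Hausdorff, the present is determined by the strict past, which gives the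
no-lookahead rule. -/

open Set

variable {X : Type*} [TopologicalSpace X]

theorem PathFrom.eq_of_forall_lt [T2Space X] {x : X} (α α' : PathFrom X x) {t : NNReal}
    (h : ∀ s < t, α.1 s = α'.1 s) : α.1 t = α'.1 t := by
  rcases eq_zero_or_pos t with rfl | ht
  · rw [α.2.2, α'.2.2]
  · have hIic : EqOn α.1 α'.1 (closure (Iio t)) := EqOn.closure h α.2.1 α'.2.1
    exact hIic ((closure_Iio' (a := t) ⟨0, ht⟩).symm ▸ self_mem_Iic)

theorem PathFrom.eq_of_forall_le_of_forall_lt [T2Space X] {x : X} (α α' : PathFrom X x)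
    {t : NNReal} (h : ∀ s < t, α.1 s = α'.1 s) : ∀ s ≤ t, α.1 s = α'.1 s := by
  intro s hs
  rcases hs.lt_or_eq with hs | rfl
  · exact h s hs
  · exact α.eq_of_forall_lt α' h

theorem noLookahead_of_causal [T2Space X] {Y : Type*} [TopologicalSpace Y] {x : X} {y : Y}
    (S : PathFrom X x → PathFrom Y y)
    (hS : ∀ α α' t, (∀ s ≤ t, α.1 s = α'.1 s) → (S α).1 t = (S α').1 t)
    (α α' : PathFrom X x) (t : NNReal) (h : ∀ s < t, α.1 s = α'.1 s) :
    ∀ s ≤ t, (S α).1 s = (S α').1 s := fun s hst =>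
  hS α α' s fun r hrs => α.eq_of_forall_le_of_forall_lt α' h r (hrs.trans hst)

noncomputable def lionChase {l m : X} (γ : Path l m) (α : PathFrom X m) : PathFrom X l :=
  ⟨fun s => if s ≤ 1 / 2 then γ.extend (2 * s) else α.1 (min (2 * s - 1) s), by
    refine ⟨Continuous.if_le ?_ ?_ continuous_id continuous_const ?_, ?_⟩
    · exact γ.continuous_extend.comp (continuous_const.mul NNReal.continuous_coe)
    · exact α.2.1.comp ((continuous_const.mul continuous_id).sub continuous_const
        |>.min continuous_id)
    · rintro s rfl
      norm_num [α.2.2]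
    · simp⟩

theorem lionChase_one {l m : X} (γ : Path l m) (α : PathFrom X m) :
    (lionChase γ α).1 1 = α.1 1 := by
  have h : ¬ (1 : NNReal) ≤ 1 / 2 := by norm_num
  have h' : (2 : NNReal) * 1 - 1 = 1 := by
    rw [tsub_eq_iff_eq_add_of_le (by norm_num)]; norm_num
  simp only [lionChase, if_neg h, h', min_self]

theorem lionChase_apply_eq {l m : X} (γ : Path l m) (α α' : PathFrom X m) (t : NNReal)
    (h : ∀ s ≤ t, α.1 s = α'.1 s) : (lionChase γ α).1 t = (lionChase γ α').1 t := by
  simp only [lionChase]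
  split_ifs
  · rfl
  · exact h _ (min_le_right _ _)

theorem exists_isLionStrategy_of_joined [T2Space X] {m l : X} (h : Joined l m) :
    ∃ S, IsLionStrategy m l S :=
  ⟨lionChase h.somePath, fun α => ⟨1, lionChase_one _ α⟩,
    noLookahead_of_causal _ (lionChase_apply_eq _)⟩

theorem exists_isManStrategy_of_continuous_of_forall_ne [T2Space X] {m l : X} (f : X → X)
    (hf : Continuous f) (hfix : ∀ x, f x ≠ x) (hfl : f l = m) :
    ∃ S, IsManStrategy m l S :=
  ⟨fun β => ⟨f ∘ β.1, hf.comp β.2.1, by simp [β.2.2, hfl]⟩, fun β t => hfix (β.1 t),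
    noLookahead_of_causal _ fun β β' t h => congrArg f (h t le_rfl)⟩

/-- In the circle `S¹` with antipodal starting points `m = 1` (man) and
`l = -1` (lion), both the lion and the man have strategies. -/
theorem stmt_19 :
    (∃ S : PathFrom {z : ℂ | ‖z‖ = 1} ⟨1, by norm_num⟩ →
           PathFrom {z : ℂ | ‖z‖ = 1} ⟨-1, by norm_num⟩,
      IsLionStrategy (⟨1, by norm_num⟩ : {z : ℂ | ‖z‖ = 1}) ⟨-1, by norm_num⟩ S) ∧
    (∃ S : PathFrom {z : ℂ | ‖z‖ = 1} ⟨-1, by norm_num⟩ →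
           PathFrom {z : ℂ | ‖z‖ = 1} ⟨1, by norm_num⟩,
      IsManStrategy (⟨1, by norm_num⟩ : {z : ℂ | ‖z‖ = 1}) ⟨-1, by norm_num⟩ S) := by
  have hS : IsPathConnected {z : ℂ | ‖z‖ = 1} := by
    simpa [Metric.sphere, dist_zero_right] using
      isPathConnected_sphere (by simp [Complex.rank_real_complex]) (0 : ℂ) zero_le_one
  refine ⟨exists_isLionStrategy_of_joined ?_, ?_⟩
  · exact (joinedIn_iff_joined _ _).mp (hS.joinedIn _ (by simp) _ (by simp))
  · refine exists_isManStrategy_of_continuous_of_forall_ne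
      (fun z => ⟨-z.1, by rw [mem_ofPred_eq, norm_neg]; exact z.2⟩) (by fun_prop)
      (fun z hz => ?_) (by ext; simp)
    have h0 : z.1 = 0 := neg_eq_self.mp (congrArg Subtype.val hz)
    simpa [h0] using z.2
end
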